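/- Let K = [0,1/2] × [0,1/2] ⊂ ℝ² and E = {(a,b) ∈ K : a + b ≤ 3/4}. For i ∈ {0,1}, the map h_i satisfies h_i(K) ⊆ E, and h_i restricted to E is a contraction for the sup norm: for all p, p′ ∈ E, ‖h_i(p) − h_i(p′)‖_∞ ≤ (2/3) ‖p − p′‖_∞. -/

import Mathlib

open MeasureTheory Filter Topology
open scoped ENNReal

attribute [local instance] Classical.propDecidable

noncomputable section

/-- The shift map on bi-infinite sequences: `(S x) n = x (n+1)`. -/
def shift {α : Type*} (x : ℤ → α) : ℤ → α := fun n => x (n + 1)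

/-- Shift by an arbitrary integer amount `m`. -/
def shiftZ {α : Type*} (m : ℤ) (x : ℤ → α) : ℤ → α := fun n => x (n + m)

/-- A run structure on a bi-infinite sequence `x`: `t k` is the starting index of the
`k`-th maximal mono-symbol block of `x`, indexed so that block `0` contains position `0`. -/
structure RunStructure (x : ℤ → ℕ) where
  t : ℤ → ℤ
  mono : StrictMono t
  start_nonpos : t 0 ≤ 0
  start_pos : 0 < t 1
  const : ∀ k i : ℤ, t k ≤ i → i < t (k + 1) → x i = x (t k)
  alt : ∀ k : ℤ, x (t (k + 1)) ≠ x (t k)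

/-- `d` is the run-length derivative of `x`: `d k` is the length of the `k`-th run. -/
def IsDelta (x d : ℤ → ℕ) : Prop :=
  ∃ r : RunStructure x, ∀ k : ℤ, (d k : ℤ) = r.t (k + 1) - r.t k

/-- The run-length derivative operator `Δ` (junk value when no derivative exists). -/
def delta (x : ℤ → ℕ) : ℤ → ℕ :=
  if h : ∃ d, IsDelta x d then h.choose else fun _ => 0

/-- A bi-infinite sequence is smooth over `{1,3}` if all its iterated derivatives exist
and take values in `{1,3}`. -/
def SmoothSeq (x : ℤ → ℕ) : Prop :=
  ∀ k : ℕ, ∀ n : ℤ, delta^[k] x n = 1 ∨ delta^[k] x n = 3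

/-- The set `X` of bi-infinite smooth sequences over `{1,3}`. -/
def SmoothX : Set (ℤ → ℕ) := {x | SmoothSeq x}

/-- The recoding alphabet: `A = 1`, `B = 3`, `C = 111`, `D = 333`. -/
inductive ABCD : Type
  | A | B | C | D
deriving DecidableEq

instance : TopologicalSpace ABCD := ⊥
instance : DiscreteTopology ABCD := ⟨rfl⟩
instance : MeasurableSpace ABCD := ⊤

open ABCD

/-- The symbol (1 or 3) of the run encoded by a letter. -/
def sval : ABCD → ℕ
  | A => 1
  | B => 3
  | C => 1
  | D => 3

/-- The length (1 or 3) of the run encoded by a letter; this is also the value of `Δx`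
at the corresponding position. -/
def lval : ABCD → ℕ
  | A => 1
  | B => 1
  | C => 3
  | D => 3

/-- `y` is the recoding of `x`: the letter `y k` encodes the `k`-th run of `x`
(its symbol and its length). -/
def IsRecoding (x : ℤ → ℕ) (y : ℤ → ABCD) : Prop :=
  ∃ r : RunStructure x, ∀ k : ℤ,
    x (r.t k) = sval (y k) ∧ r.t (k + 1) - r.t k = (lval (y k) : ℤ)

/-- The recoding map `rec` (junk value when no recoding exists). -/
def recode (x : ℤ → ℕ) : ℤ → ABCD :=
  if h : ∃ y, IsRecoding x y then h.choose else fun _ => A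

/-- The set `Y = rec(X)` of recodings of smooth sequences. -/
def SmoothY : Set (ℤ → ABCD) := recode '' SmoothX

/-- The derivative operator induced on recodings: since `(Δx) i = lval (rec x i)`,
we have `Δ(rec x) = rec (Δ x) = recode (lval ∘ rec x)`. -/
def deltaY (y : ℤ → ABCD) : ℤ → ABCD := recode fun i => (lval (y i) : ℕ)

/-- `y` is well-aligned: the elementary block of `y` containing coordinate `0` starts
at position `0` (elementary blocks of `y` are exactly the runs of `Δx`, and
`(Δx) i = lval (y i)`). -/
def WellAligned (y : ℤ → ABCD) : Prop := lval (y (-1)) ≠ lval (y 0)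

/-- `B_Y^L`: the set of `y ∈ Y` such that `y, Δy, ..., Δ^{L-1} y` are all well-aligned. -/
def BY (L : ℕ) : Set (ℤ → ABCD) :=
  {y | y ∈ SmoothY ∧ ∀ l < L, WellAligned (deltaY^[l] y)}

/-- `Σ_y^L(n) = #{k ∈ [1,n] : S^k y ∈ B_Y^L}`. -/
def SigY (L : ℕ) (y : ℤ → ABCD) (n : ℕ) : ℕ :=
  ((Finset.Icc 1 n).filter fun k => shift^[k] y ∈ BY L).card

/-- `y` contains an elementary block in `{ABA, DCD}` (for `y ∈ Y`, any such factor is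
automatically an elementary block). -/
def HasType0 (y : ℤ → ABCD) : Prop :=
  ∃ i : ℤ, (y i = A ∧ y (i + 1) = B ∧ y (i + 2) = A) ∨
           (y i = D ∧ y (i + 1) = C ∧ y (i + 2) = D)

/-- `y` contains an elementary block in `{BAB, CDC}`. -/
def HasType1 (y : ℤ → ABCD) : Prop :=
  ∃ i : ℤ, (y i = B ∧ y (i + 1) = A ∧ y (i + 2) = B) ∨
           (y i = C ∧ y (i + 1) = D ∧ y (i + 2) = C)

/-- The type of a recoded sequence: `false` = type 0, `true` = type 1. -/
def typeOf (y : ℤ → ABCD) : Bool := decide (HasType1 y)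

/-- The sequence of types of the successive derivatives of a smooth sequence `x`. -/
def TypesX (x : ℤ → ℕ) : ℕ → Bool := fun n => typeOf (recode (delta^[n] x))

/-- The sequence of types of the successive derivatives of a recoded sequence `y`. -/
def TypesY (y : ℤ → ABCD) : ℕ → Bool := fun n => typeOf (deltaY^[n] y)

/-- `X_τ`: smooth bi-infinite sequences whose type sequence is exactly `τ`. -/
def Xset (τ : ℕ → Bool) : Set (ℤ → ℕ) := {x ∈ SmoothX | TypesX x = τ}

/-- `Y_τ = rec(X_τ)`. -/
def Yset (τ : ℕ → Bool) : Set (ℤ → ABCD) := recode '' Xset τ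

/-- A sequence over `{A,B,C,D}` is alternating: no two consecutive symbols in `{A,C}`
and no two consecutive symbols in `{B,D}`. -/
def Alternating (y : ℤ → ABCD) : Prop := ∀ n : ℤ, sval (y n) ≠ sval (y (n + 1))

/-- The substitutions `φ₀` and `φ₁` on letters. -/
def phiW : Bool → ABCD → List ABCD
  | false, A => [A]
  | false, B => [D]
  | false, C => [A, B, A]
  | false, D => [D, C, D]
  | true, A => [B]
  | true, B => [C]
  | true, C => [B, A, B]
  | true, D => [C, D, C]

/-- `z` is the image of the bi-infinite sequence `y` under the substitution `φ_t`, with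
the convention that the image of the letter at position `0` starts at position `0`. -/
def IsSubst (t : Bool) (y z : ℤ → ABCD) : Prop :=
  ∃ u : ℤ → ℤ, u 0 = 0 ∧
    (∀ k : ℤ, u (k + 1) = u k + (phiW t (y k)).length) ∧
    (∀ k : ℤ, ∀ j : Fin (phiW t (y k)).length, z (u k + (j : ℕ)) = (phiW t (y k)).get j)

/-- The substitution `φ_t` on bi-infinite sequences. -/
def substF (t : Bool) (y : ℤ → ABCD) : ℤ → ABCD :=
  if h : ∃ z, IsSubst t y z then h.choose else y

/-- The composition `φ_{τ₀} ∘ φ_{τ₁} ∘ ⋯ ∘ φ_{τ_{L-1}}`. -/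
def substComp (τ : ℕ → Bool) : ℕ → (ℤ → ABCD) → (ℤ → ABCD)
  | 0 => id
  | L + 1 => substF (τ 0) ∘ substComp (fun n => τ (n + 1)) L

/-- The homographies `h₀` and `h₁`. -/
def hmap : Bool → ℝ × ℝ → ℝ × ℝ
  | false, p => ((1 - p.1) / (3 - 2 * (p.1 + p.2)), (1 / 2 - p.1) / (3 - 2 * (p.1 + p.2)))
  | true, p => ((1 / 2 - p.1) / (3 - 2 * (p.1 + p.2)), (1 - p.1) / (3 - 2 * (p.1 + p.2)))

/-- The square `K = [0,1/2] × [0,1/2]`. -/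
def Ksq : Set (ℝ × ℝ) := Set.Icc (0 : ℝ) (1 / 2) ×ˢ Set.Icc (0 : ℝ) (1 / 2)

/-- The domain `E = {(a,b) ∈ K : a + b ≤ 3/4}`. -/
def Eset : Set (ℝ × ℝ) := {p ∈ Ksq | p.1 + p.2 ≤ 3 / 4}

/-- The composition `h_{t₀} ∘ h_{t₁} ∘ ⋯ ∘ h_{t_L}`. -/
def hComp (t : ℕ → Bool) : ℕ → (ℝ × ℝ → ℝ × ℝ)
  | 0 => hmap (t 0)
  | L + 1 => hComp t L ∘ hmap (t (L + 1))

/-- The point `(a(t), b(t))`, unique point of `⋂_L (h_{t₀} ∘ ⋯ ∘ h_{t_L})(E)`. -/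
def abPoint (t : ℕ → Bool) : ℝ × ℝ :=
  if h : ∃ p : ℝ × ℝ, (⋂ L : ℕ, hComp t L '' Eset) = {p} then h.choose else 0

/-- The number of occurrences of the letter `s` among positions `1, ..., m` of `z`. -/
def letterCount (s : ABCD) (z : ℤ → ABCD) (m : ℕ) : ℕ :=
  ((Finset.Icc 1 m).filter fun k => z (k : ℤ) = s).card

/-- `w` occurs as a factor of `y` at position `i`. -/
def IsFactorAt (w : List ABCD) (y : ℤ → ABCD) (i : ℤ) : Prop :=
  ∀ j : Fin w.length, y (i + (j : ℕ)) = w.get j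

/-- The cylinder set `[w]` in `{1,3}^ℤ`. -/
def cylX (w : List ℕ) : Set (ℤ → ℕ) :=
  {x | ∀ j : Fin w.length, x ((j : ℕ) : ℤ) = w.get j}

/-- The cylinder set `[w]` in `{A,B,C,D}^ℤ`. -/
def cylY (w : List ABCD) : Set (ℤ → ABCD) :=
  {y | ∀ j : Fin w.length, y ((j : ℕ) : ℤ) = w.get j}

/-- The number of occurrences of the finite word `w` in the prefix `x₀ ⋯ x_{n-1}`. -/
def occCount (x : ℤ → ℕ) (w : List ℕ) (n : ℕ) : ℕ :=
  ((Finset.range n).filter fun i =>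
    i + w.length ≤ n ∧ ∀ j : Fin w.length, x (((i + (j : ℕ) : ℕ)) : ℤ) = w.get j).card

/-- A subshift `Z` is minimal if it contains no nonempty proper closed shift-invariant
subset. -/
def ShiftMinimal {α : Type*} [TopologicalSpace α] (Z : Set (ℤ → α)) : Prop :=
  ∀ W : Set (ℤ → α), W ⊆ Z → W.Nonempty → IsClosed W → shift '' W = W → W = Z

/-!
`h₁` is `h₀` followed by the coordinate swap, which preserves `E` and the sup norm, so it suffices
to treat `h₀`. With `D(a, b) = 3 - 2(a + b)`, each coordinate of `h₀ p - h₀ q` has the form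
`(α (a - c) + β (b - d)) / (D(p) D(q))` where, for `p ∈ K`, `|α| + |β| = D(p)`. Hence
`‖h₀ p - h₀ q‖ ≤ ‖p - q‖ / D(q)`, and `D ≥ 3/2` on `E`.
-/

theorem abs_mul_add_mul_div_mul_le {u v e₁ e₂ D D' : ℝ} (he : |e₁| + |e₂| ≤ D) (hD' : 0 < D') :
    |(u * e₁ + v * e₂) / (D * D')| ≤ max |u| |v| / D' := by
  rcases ((add_nonneg (abs_nonneg e₁) (abs_nonneg e₂)).trans he).eq_or_lt with rfl | hD
  · simp only [zero_mul, div_zero, abs_zero]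
    positivity
  have hnum : |u * e₁ + v * e₂| ≤ max |u| |v| * D :=
    calc |u * e₁ + v * e₂| ≤ |u| * |e₁| + |v| * |e₂| := by
          simpa only [abs_mul] using abs_add_le (u * e₁) (v * e₂)
      _ ≤ max |u| |v| * (|e₁| + |e₂|) := by
          rw [mul_add]
          gcongr
          exacts [le_max_left _ _, le_max_right _ _]
      _ ≤ max |u| |v| * D := by gcongr
  rw [abs_div, abs_of_pos (mul_pos hD hD'), div_le_div_iff₀ (mul_pos hD hD') hD']
  nlinarith

theorem Prod.norm_swap_sub_swap {E F : Type*} [SeminormedAddCommGroup E]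
    [SeminormedAddCommGroup F] (x y : E × F) : ‖x.swap - y.swap‖ = ‖x - y‖ := by
  simp only [Prod.norm_def, Prod.fst_sub, Prod.snd_sub, Prod.fst_swap, Prod.snd_swap, max_comm]

def hden (p : ℝ × ℝ) : ℝ := 3 - 2 * (p.1 + p.2)

theorem hmap_false_eq (p : ℝ × ℝ) :
    hmap false p = ((1 - p.1) / hden p, (1 / 2 - p.1) / hden p) := rfl

theorem hmap_true_eq_swap (p : ℝ × ℝ) : hmap true p = (hmap false p).swap := rfl

theorem swap_mem_Eset {p : ℝ × ℝ} (hp : p ∈ Eset) : p.swap ∈ Eset := by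
  obtain ⟨⟨ha, hb⟩, hab⟩ := hp
  exact ⟨⟨hb, ha⟩, by simpa only [Prod.fst_swap, Prod.snd_swap, add_comm] using hab⟩

theorem hmap_false_mapsTo : Set.MapsTo (hmap false) Ksq Eset := by
  rintro ⟨a, b⟩ ⟨⟨ha₀, ha⟩, hb₀, hb⟩
  dsimp only at ha₀ ha hb₀ hb
  have hD : 0 < hden (a, b) := by rw [hden]; linarith
  rw [hmap_false_eq]
  refine ⟨⟨⟨?_, ?_⟩, ?_, ?_⟩, ?_⟩
  all_goals
    simp only [← add_div, le_div_iff₀ hD, div_le_iff₀ hD]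
    rw [hden]
    linarith

theorem norm_hmap_false_sub_le {p q : ℝ × ℝ} (hp : p ∈ Ksq) (hq : 0 < hden q) :
    ‖hmap false p - hmap false q‖ ≤ ‖p - q‖ / hden q := by
  obtain ⟨a, b⟩ := p
  obtain ⟨c, d⟩ := q
  obtain ⟨⟨ha₀, ha⟩, hb₀, hb⟩ := hp
  have hDp : hden (a, b) ≠ 0 := by simp only [hden]; linarith
  have hfst : (1 - a) / hden (a, b) - (1 - c) / hden (c, d)
      = ((a - c) * (2 * b - 1) + (b - d) * (2 - 2 * a)) / (hden (a, b) * hden (c, d)) := by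
    rw [div_sub_div _ _ hDp hq.ne']
    simp only [hden]
    ring
  have hsnd : (1 / 2 - a) / hden (a, b) - (1 / 2 - c) / hden (c, d)
      = ((a - c) * (2 * b - 2) + (b - d) * (1 - 2 * a)) / (hden (a, b) * hden (c, d)) := by
    rw [div_sub_div _ _ hDp hq.ne']
    simp only [hden]
    ring
  simp only [hmap_false_eq, Prod.norm_def, Prod.mk_sub_mk, Real.norm_eq_abs, hfst, hsnd]
  refine max_le (abs_mul_add_mul_div_mul_le ?_ hq) (abs_mul_add_mul_div_mul_le ?_ hq) <;>
  · rw [abs_of_nonpos (by linarith), abs_of_nonneg (by linarith), hden]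
    linarith

theorem hmap_false_contracting {p q : ℝ × ℝ} (hp : p ∈ Eset) (hq : q ∈ Eset) :
    ‖hmap false p - hmap false q‖ ≤ 2 / 3 * ‖p - q‖ := by
  have hDq : 3 / 2 ≤ hden q := by simp only [hden]; linarith [hq.2]
  calc ‖hmap false p - hmap false q‖ ≤ ‖p - q‖ / hden q :=
        norm_hmap_false_sub_le hp.1 (by linarith)
    _ ≤ ‖p - q‖ / (3 / 2) := by gcongr
    _ = 2 / 3 * ‖p - q‖ := by ring

/-- Contracting homographies.
For `i ∈ {0,1}`, `h_i` maps `K = [0,1/2]²` into `E = {(a,b) ∈ K : a+b ≤ 3/4}`, and is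
`2/3`-Lipschitz on `E` for the sup norm (the norm on `ℝ × ℝ` is the sup norm). -/
theorem stmt10 (t : Bool) :
    Set.MapsTo (hmap t) Ksq Eset ∧
    ∀ p ∈ Eset, ∀ q ∈ Eset, ‖hmap t p - hmap t q‖ ≤ 2 / 3 * ‖p - q‖ := by
  cases t
  · exact ⟨hmap_false_mapsTo, fun p hp q hq => hmap_false_contracting hp hq⟩
  · refine ⟨fun p hp => swap_mem_Eset (hmap_false_mapsTo hp), fun p hp q hq => ?_⟩
    simpa only [hmap_true_eq_swap, Prod.norm_swap_sub_swap] using hmap_false_contracting hp hq
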